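/- arXiv:1810.01513 — 4 statements merged into one kernel-verified Lean document; each statement's English description precedes it below -/
import Mathlib

section
/- For any finite k, n, c, there exists a finite R such that every coloring of the n-element subsets of an R-element set with c colors admits a homogeneous subset of size k (i.e., R → (k)^n_c). -/
/-!
Compactness reduces the finite theorem to the infinite one. If every `Fin R` carried a coloring
`g R` without a homogeneous `k`-set, a free ultrafilter on the sizes `R` would assemble the `g R` into one
coloring of the finite subsets of `ℕ`. The infinite Ramsey theorem yields an infinite homogeneous
set for it; a `k`-subset `K` of that set is then homogeneous for `g R` for ultrafilter-many `R`.

The infinite Ramsey theorem is proved by induction on `n`: repeatedly pick a point `a i` and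
shrink the current infinite set so that `insert (a i) s` has a colour `c i` depending only on `i`;
infinitely many `i` share one colour, and the corresponding points form the homogeneous set.
-/

open Filter Set

section InfiniteRamsey

variable {α κ : Type*}

lemma antitone_of_succ_subset_diff {T : ℕ → Set α} {a : ℕ → α}
    (hstep : ∀ i, T (i + 1) ⊆ T i \ {a i}) : Antitone T :=
  antitone_nat_of_succ_le fun i => (hstep i).trans sdiff_subset

lemma mem_of_lt_of_succ_subset_diff {T : ℕ → Set α} {a : ℕ → α}
    (hstep : ∀ i, T (i + 1) ⊆ T i \ {a i}) (hmem : ∀ i, a i ∈ T i) {i j : ℕ} (hij : i < j) :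
    a j ∈ T (i + 1) :=
  antitone_of_succ_subset_diff hstep hij (hmem j)

lemma injective_of_succ_subset_diff {T : ℕ → Set α} {a : ℕ → α}
    (hstep : ∀ i, T (i + 1) ⊆ T i \ {a i}) (hmem : ∀ i, a i ∈ T i) : Function.Injective a :=
  .of_lt_imp_ne fun i _ hij heq =>
    (hstep i (mem_of_lt_of_succ_subset_diff hstep hmem hij)).2 heq.symm

lemma monochromatic_image_of_succ_subset_diff [DecidableEq α] {n : ℕ} {f : Finset α → κ}
    {T : ℕ → Set α} {a : ℕ → α} {c : ℕ → κ} (hstep : ∀ i, T (i + 1) ⊆ T i \ {a i})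
    (hmem : ∀ i, a i ∈ T i)
    (hinsert : ∀ i (s : Finset α), ↑s ⊆ T (i + 1) → s.card = n → f (insert (a i) s) = c i)
    (v : κ) (s : Finset α) (hs : ↑s ⊆ a '' {i | c i = v}) (hcard : s.card = n + 1) :
    f s = v := by
  classical
  -- The point of `s` of least index plays the role of `a i`.
  have hex : ∃ i, c i = v ∧ a i ∈ s := by
    obtain ⟨x, hx⟩ := s.card_pos.mp (by omega)
    obtain ⟨i, hi, rfl⟩ := hs hx
    exact ⟨i, hi, hx⟩
  obtain ⟨hcv, hmem₀⟩ := Nat.find_spec hex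
  have herase : ↑(s.erase (a (Nat.find hex))) ⊆ T (Nat.find hex + 1) := by
    intro x hx
    obtain ⟨hne, hxs⟩ := Finset.mem_erase.mp hx
    obtain ⟨j, hj, rfl⟩ := hs hxs
    refine mem_of_lt_of_succ_subset_diff hstep hmem
      ((Nat.find_min' hex ⟨hj, hxs⟩).lt_of_ne ?_)
    rintro rfl
    exact hne rfl
  rw [← Finset.insert_erase hmem₀, hinsert _ _ herase (by simp [hmem₀, hcard]), hcv]

theorem Set.Infinite.exists_infinite_monochromatic [Finite κ] (n : ℕ) (f : Finset α → κ)
    {S : Set α} (hS : S.Infinite) :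
    ∃ H ⊆ S, H.Infinite ∧ ∃ v, ∀ s : Finset α, ↑s ⊆ H → s.card = n → f s = v := by
  classical
  induction n generalizing f S with
  | zero =>
    refine ⟨S, subset_rfl, hS, f ∅, fun s _ hs => ?_⟩
    rw [Finset.card_eq_zero.mp hs]
  | succ n ih =>
    have shrink : ∀ T : {T : Set α // T.Infinite}, ∃ a ∈ T.1, ∃ H : {H : Set α // H.Infinite},
        H.1 ⊆ T.1 \ {a} ∧ ∃ v, ∀ s : Finset α, ↑s ⊆ H.1 → s.card = n → f (insert a s) = v := by
      rintro ⟨T, hT⟩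
      obtain ⟨a, ha⟩ := hT.nonempty
      obtain ⟨H, hHT, hH, v, hv⟩ := ih (fun s => f (insert a s)) (hT.sdiff (finite_singleton a))
      exact ⟨a, ha, ⟨H, hH⟩, hHT, v, hv⟩
    choose a ha next hnext col hcol using shrink
    let T : ℕ → {T : Set α // T.Infinite} := fun i => next^[i] ⟨S, hS⟩
    have hT : ∀ i, T (i + 1) = next (T i) := fun i => Function.iterate_succ_apply' ..
    have hstep : ∀ i, (T (i + 1)).1 ⊆ (T i).1 \ {a (T i)} := fun i => hT i ▸ hnext (T i)
    have hmem : ∀ i, a (T i) ∈ (T i).1 := fun i => ha (T i)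
    obtain ⟨v, hv⟩ := Finite.exists_infinite_fiber fun i => col (T i)
    refine ⟨(fun i => a (T i)) '' {i | col (T i) = v}, ?_,
      (infinite_coe_iff.mp hv).image (injective_of_succ_subset_diff hstep hmem).injOn, v,
      monochromatic_image_of_succ_subset_diff hstep hmem
        (fun i s hs => hcol (T i) s (hT i ▸ hs)) v⟩
    · rintro _ ⟨i, -, rfl⟩
      exact antitone_of_succ_subset_diff (T := fun i => (T i).1) hstep i.zero_le (hmem i)

end InfiniteRamsey

lemma Ultrafilter.exists_eventually_eq {ι κ : Type*} [Finite κ] (U : Ultrafilter ι) (g : ι → κ) :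
    ∃ v, ∀ᶠ i in U, g i = v := by
  obtain ⟨v, hv⟩ := (U.map g).eq_pure_of_finite
  exact ⟨v, show {v} ∈ U.map g by simp [hv]⟩

theorem exists_monochromatic_of_forall_fin {κ : Type*} [Finite κ] (k n : ℕ)
    (g : ∀ R, Finset (Fin R) → κ) :
    ∃ R, ∃ X : Finset (Fin R), k ≤ X.card ∧ ∃ v, ∀ s ⊆ X, s.card = n → g R s = v := by
  let F : ℕ → Finset ℕ → κ := fun R s => g R (s.preimage Fin.val Fin.val_injective.injOn)
  choose lim hlim using fun s => (hyperfilter ℕ).exists_eventually_eq (F · s)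
  obtain ⟨H, -, hH, v, hv⟩ := infinite_univ.exists_infinite_monochromatic n lim
  obtain ⟨K, hKH, rfl⟩ := hH.exists_subset_card_eq k
  have hlarge : ∀ m, ∀ᶠ R in hyperfilter ℕ, m < R := fun m =>
    hyperfilter_le_cofinite (Nat.cofinite_eq_atTop ▸ eventually_gt_atTop m)
  obtain ⟨R, hF, hKR⟩ := ((eventually_all_finset (K.powersetCard n)).2 fun s _ => hlim s).and
    ((eventually_all_finset K).2 fun m _ => hlarge m) |>.exists
  refine ⟨R, K.attachFin hKR, (Finset.card_attachFin K hKR).ge, v, fun s hs hcard => ?_⟩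
  have hsK : s.map Fin.valEmbedding ⊆ K := by
    simpa using (Finset.map_subset_map (f := Fin.valEmbedding)).mpr hs
  calc g R s = F R (s.map Fin.valEmbedding) :=
      congrArg (g R) (Finset.preimage_map Fin.valEmbedding s).symm
    _ = lim (s.map Fin.valEmbedding) :=
      hF _ (Finset.mem_powersetCard.mpr ⟨hsK, by simpa using hcard⟩)
    _ = v := hv _ (fun x hx => hKH (Finset.coe_subset.mpr hsK hx)) (by simpa using hcard)

/-- Finite Ramsey's theorem: for all finite `k`, `n`, `c` there is a finite `R` such that
`R → (k)^n_c`: every coloring of the `n`-element subsets of an `R`-element set with `c`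
colors admits a homogeneous subset of size `k`. -/
theorem stmt0 (k n c : ℕ) :
    ∃ R : ℕ, ∀ f : Finset (Fin R) → Fin c,
      ∃ X : Finset (Fin R), k ≤ X.card ∧
        ∀ s t : Finset (Fin R), s ⊆ X → t ⊆ X → s.card = n → t.card = n → f s = f t := by
  by_contra! h
  choose g hg using h
  obtain ⟨R, X, hX, v, hv⟩ := exists_monochromatic_of_forall_fin k n g
  obtain ⟨s, t, hs, ht, hsn, htn, hst⟩ := hg R X hX
  exact hst ((hv s hs hsn).trans (hv t ht htn).symm)
end

section
/- For every infinite cardinal κ and every natural number n ≥ 1, the cardinal (beth_{n-1}(κ))^+ satisfies (beth_{n-1}(κ))^+ → (κ^+)^n_κ: every coloring of n-element subsets of a set of size (beth_{n-1}(κ))^+ with κ colors admits a homogeneous subset of size κ^+. -/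
/-!
Induction on the exponent. For the step from `n` to `n + 1` with `μ = beth_{n-1}(κ)`, index a
well-order `W` of type `μ⁺`. For each point `x`, build by transfinite recursion along `W` the
branch through `x`: at stage `w` choose an element not chosen before that gives every `n`-set of
earlier elements the same colour as `x` does (`x` itself qualifies until it is chosen). If some `x`
never appears on its own branch, that branch is an injective sequence of length `μ⁺` along which
the colour of an `(n + 1)`-set depends only on its `n` smallest elements, and the induction
hypothesis, applied to the colouring these induce on `n`-sets, yields the homogeneous set.
Otherwise every `x` is recovered from the stage `L` at which it appears together with the colours
of `{x} ∪ I` for `I` below `L`, since these data determine the branch up to `L`. This injects the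
ground set, of size `(2 ^ μ)⁺`, into a set of size `μ⁺ · (2 ^ μ) ^ μ = 2 ^ μ`.
-/

open Cardinal Set Function

namespace ErdosRado

universe u

def IsHomogeneous {α C : Type*} (f : Finset α → C) (n : ℕ) (X : Set α) : Prop :=
  ∀ s t : Finset α, ↑s ⊆ X → ↑t ⊆ X → s.card = n → t.card = n → f s = f t

theorem exists_isHomogeneous_one {κ : Cardinal.{u}} (hκ : ℵ₀ ≤ κ) {α C : Type u}
    (hα : Order.succ κ ≤ #α) (hC : #C ≤ κ) (f : Finset α → C) :
    ∃ X : Set α, Order.succ κ ≤ #X ∧ IsHomogeneous f 1 X := by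
  obtain ⟨b, hb⟩ := infinite_pigeonhole_card (fun a => f {a}) (Order.succ κ) hα
    (hκ.trans (Order.le_succ κ))
    (by rw [(isRegular_succ hκ).cof_ord]; exact hC.trans_lt (Order.lt_succ κ))
  refine ⟨_, hb, fun s t hs ht hs1 ht1 => ?_⟩
  obtain ⟨a, rfl⟩ := Finset.card_eq_one.1 hs1
  obtain ⟨a', rfl⟩ := Finset.card_eq_one.1 ht1
  simp only [Finset.coe_singleton, singleton_subset_iff, mem_preimage, mem_singleton_iff] at hs ht
  rw [hs, ht]

theorem exists_eq_insert_of_card_eq_succ {I : Type*} [LinearOrder I] {J : Finset I} {n : ℕ}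
    (hJ : J.card = n + 1) : ∃ j J', (∀ i ∈ J', i < j) ∧ J'.card = n ∧ J = insert j J' := by
  have hne : J.Nonempty := Finset.card_pos.1 (by omega)
  refine ⟨J.max' hne, J.erase (J.max' hne), fun i hi => J.lt_max'_of_mem_erase_max' hne hi,
    by rw [Finset.card_erase_of_mem (J.max'_mem hne), hJ]; rfl,
    (Finset.insert_erase (J.max'_mem hne)).symm⟩

theorem isHomogeneous_image_of_endHomogeneous {α C I : Type*} [DecidableEq α] [LinearOrder I]
    {f : Finset α → C} {n : ℕ} {u : I → α} (hu : Injective u) {x : α}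
    (hend : ∀ (J : Finset I) (j : I), (∀ i ∈ J, i < j) → J.card = n →
      f (insert (u j) (J.image u)) = f (insert x (J.image u)))
    {Y : Set I} (hY : IsHomogeneous (fun J => f (insert x (J.image u))) n Y) :
    IsHomogeneous f (n + 1) (u '' Y) := by
  have key : ∀ s : Finset α, ↑s ⊆ u '' Y → s.card = n + 1 →
      ∃ J : Finset I, ↑J ⊆ Y ∧ J.card = n ∧ f s = f (insert x (J.image u)) := by
    intro s hs hcard
    obtain ⟨K, hKY, rfl⟩ := Finset.subset_set_image_iff.1 hs
    rw [Finset.card_image_of_injective _ hu] at hcard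
    obtain ⟨j, J, hJj, hJ, rfl⟩ := exists_eq_insert_of_card_eq_succ hcard
    refine ⟨J, (Finset.coe_subset.2 (Finset.subset_insert j J)).trans hKY, hJ, ?_⟩
    rw [Finset.image_insert, hend J j hJj hJ]
  intro s t hs ht hscard htcard
  obtain ⟨J, hJY, hJ, hfs⟩ := key s hs hscard
  obtain ⟨J', hJ'Y, hJ', hft⟩ := key t ht htcard
  rw [hfs, hft]
  exact hY J J' hJY hJ'Y hJ hJ'

section Branch

variable {α C W : Type*} [DecidableEq α] [LinearOrder W] (c : Finset α → C) (n : ℕ)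

def candidates (x : α) (g : W → α) (w : W) : Set α :=
  {a | (∀ v < w, g v ≠ a) ∧ ∀ I : Finset W, (∀ i ∈ I, i < w) → I.card = n →
    c (insert a (I.image g)) = c (insert x (I.image g))}

variable {c n}

theorem self_mem_candidates {x : α} {g : W → α} {w : W} (h : ∀ v < w, g v ≠ x) :
    x ∈ candidates c n x g w :=
  ⟨h, fun _ _ _ => rfl⟩

theorem candidates_congr {x x' : α} {g g' : W → α} {w : W} (hg : ∀ v < w, g v = g' v)
    (hx : ∀ I : Finset W, (∀ i ∈ I, i < w) → I.card = n →
      c (insert x (I.image g)) = c (insert x' (I.image g'))) :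
    candidates c n x g w = candidates c n x' g' w := by
  have himg : ∀ I : Finset W, (∀ i ∈ I, i < w) → I.image g = I.image g' :=
    fun I hI => Finset.image_congr fun i hi => hg i (hI i hi)
  ext a
  refine and_congr (forall₂_congr fun v hv => by rw [hg v hv])
    (forall₂_congr fun I hI => imp_congr_right fun hcard => ?_)
  rw [← hx I hI hcard, himg I hI]

variable [WellFoundedLT W] (c n)

/-- Until `x` is chosen it is itself a candidate, so `insert x` only supplies a default value
after that stage. -/
noncomputable def branch (x : α) : W → α :=
  wellFounded_lt.fix fun w ih =>
    (insert_nonempty x (candidates c n x (fun v => if hv : v < w then ih v hv else x) w)).some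

theorem branch_eq (x : α) (w : W) :
    branch c n x w = (insert_nonempty x (candidates c n x (branch c n x) w)).some := by
  rw [branch, WellFounded.fix_eq]
  congr 2
  have hg : ∀ v < w, (if hv : v < w then branch c n x v else x) = branch c n x v :=
    fun v hv => dif_pos hv
  exact candidates_congr hg fun I hI _ => by
    congr 2
    exact Finset.image_congr fun i hi => hg i (hI i hi)

variable {c n}

theorem branch_mem_candidates {x : α} {w : W} (h : ∀ v < w, branch c n x v ≠ x) :
    branch c n x w ∈ candidates c n x (branch c n x) w := by
  rw [branch_eq]
  exact (insert_eq_of_mem (self_mem_candidates h)).subset (Nonempty.some_mem _)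

theorem branch_eq_branch {x y : α} {L : W} (hx : ∀ v < L, branch c n x v ≠ x)
    (hy : ∀ v < L, branch c n y v ≠ y)
    (hxy : ∀ I : Finset W, (∀ i ∈ I, i < L) → I.card = n →
      c (insert x (I.image (branch c n x))) = c (insert y (I.image (branch c n y)))) :
    ∀ w ≤ L, branch c n x w = branch c n y w := by
  intro w
  induction w using WellFoundedLT.induction with
  | _ w ih =>
  intro hwL
  have hbelow : ∀ v < w, v < L := fun v hv => hv.trans_le hwL
  rw [branch_eq, branch_eq]
  congr 1
  rw [insert_eq_of_mem (self_mem_candidates fun v hv => hx v (hbelow v hv)),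
    insert_eq_of_mem (self_mem_candidates fun v hv => hy v (hbelow v hv))]
  exact candidates_congr (fun v hv => ih v hv (hbelow v hv).le)
    fun I hI => hxy I fun i hi => hbelow i (hI i hi)

theorem branch_injective {x : α} (h : ∀ w : W, branch c n x w ≠ x) :
    Injective (branch c n x : W → α) :=
  Injective.of_lt_imp_ne fun v _ hvw => (branch_mem_candidates fun u _ => h u).1 v hvw

end Branch

theorem exists_forall_branch_ne {α C W : Type u} [DecidableEq α] [LinearOrder W]
    [WellFoundedLT W] (c : Finset α → C) (n : ℕ) (h : #(Σ w : W, Finset (Iio w) → C) < #α) :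
    ∃ x : α, ∀ w : W, branch c n x w ≠ x := by
  by_contra! hret
  let L : α → W := fun x => wellFounded_lt.min {w | branch c n x w = x} (hret x)
  have hL : ∀ x, branch c n x (L x) = x := fun x => wellFounded_lt.min_mem _ (hret x)
  have hLmin : ∀ x, ∀ v < L x, branch c n x v ≠ x :=
    fun x _ hv hvx => wellFounded_lt.not_lt_min {w | branch c n x w = x} hvx hv
  let F : α → Σ w : W, Finset (Iio w) → C := fun x =>
    ⟨L x, fun J => c (insert x ((J.map (Embedding.subtype _)).image (branch c n x)))⟩
  refine h.not_ge (mk_le_of_injective (f := F) fun x y hxy => ?_)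
  have hLxy : L x = L y := congrArg Sigma.fst hxy
  have hcolour : ∀ I : Finset W, (∀ i ∈ I, i < L x) →
      c (insert x (I.image (branch c n x))) = c (insert y (I.image (branch c n y))) := by
    intro I hI
    -- evaluating at `I` on both sides sidesteps the heterogeneous equality of the second components
    have := congrArg (fun p => p.2 (I.subtype (· ∈ Iio p.1))) hxy
    simpa only [F, Finset.subtype_map_of_mem (p := (· ∈ Iio (L x))) hI,
      Finset.subtype_map_of_mem (p := (· ∈ Iio (L y))) (hLxy ▸ hI)] using this
  calc x = branch c n x (L x) := (hL x).symm
    _ = branch c n y (L x) :=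
        branch_eq_branch (hLmin x) (hLxy ▸ hLmin y) (fun I hI _ => hcolour I hI) _ le_rfl
    _ = y := hLxy ▸ hL y

theorem mk_sigma_finset_Iio_arrow_le {W C : Type u} [Preorder W] {μ : Cardinal.{u}}
    (hμ : ℵ₀ ≤ μ) (hW : #W ≤ 2 ^ μ) (hIio : ∀ w : W, #(Iio w) ≤ μ) (hC : #C ≤ 2 ^ μ) :
    #(Σ w : W, Finset (Iio w) → C) ≤ 2 ^ μ := by
  classical
  have hfinset : ∀ w : W, #(Finset (Iio w)) ≤ μ := fun w =>
    (mk_le_of_surjective List.toFinset_surjective).trans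
      ((mk_list_le_max _).trans (max_le hμ (hIio w)))
  have harrow : ∀ w : W, #(Finset (Iio w) → C) ≤ 2 ^ μ := fun w =>
    calc #(Finset (Iio w) → C) = #C ^ #(Finset (Iio w)) := (power_def _ _).symm
      _ ≤ (2 ^ μ) ^ μ := (power_le_power_right hC).trans
          (power_le_power_left (power_ne_zero _ two_ne_zero) (hfinset w))
      _ = 2 ^ μ := by rw [← power_mul, mul_eq_self hμ]
  calc #(Σ w : W, Finset (Iio w) → C) ≤ #W * 2 ^ μ := by
        rw [mk_sigma, ← sum_const']; exact sum_le_sum _ _ harrow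
    _ ≤ 2 ^ μ * 2 ^ μ := mul_le_mul_left hW _
    _ = 2 ^ μ := mul_eq_self (hμ.trans (cantor μ).le)

theorem erdos_rado {κ : Cardinal.{u}} (hκ : ℵ₀ ≤ κ) (m : ℕ) {α C : Type u}
    (hα : Order.succ ((fun x : Cardinal => 2 ^ x)^[m] κ) ≤ #α) (hC : #C ≤ κ)
    (f : Finset α → C) : ∃ X : Set α, Order.succ κ ≤ #X ∧ IsHomogeneous f (m + 1) X := by
  classical
  induction m generalizing α with
  | zero => exact exists_isHomogeneous_one hκ hα hC f
  | succ m ih =>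
    set μ := (fun x : Cardinal => 2 ^ x)^[m] κ
    have hκμ : κ ≤ μ := id_le_iterate_of_id_le (fun x => (cantor x).le) m κ
    have hμ : ℵ₀ ≤ μ := hκ.trans hκμ
    rw [iterate_succ_apply'] at hα
    have hW : #(Order.succ μ).ord.ToType ≤ 2 ^ μ := by
      rw [mk_ord_toType]; exact Order.succ_le_of_lt (cantor μ)
    have hIio (w : (Order.succ μ).ord.ToType) : #(Iio w) ≤ μ :=
      Order.lt_succ_iff.1 (by simpa using mk_Iio_lt w)
    have hsigma : #(Σ w : (Order.succ μ).ord.ToType, Finset (Iio w) → C) < #α :=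
      (mk_sigma_finset_Iio_arrow_le hμ hW hIio (hC.trans (hκμ.trans (cantor μ).le))).trans_lt
        ((Order.lt_succ _).trans_le hα)
    obtain ⟨x, hx⟩ := exists_forall_branch_ne f (m + 1) hsigma
    have hinj := branch_injective hx
    obtain ⟨Y, hYcard, hY⟩ := ih (mk_ord_toType _).ge
      fun J => f (insert x (J.image (branch f (m + 1) x)))
    exact ⟨_, (mk_image_eq hinj).ge.trans' hYcard, isHomogeneous_image_of_endHomogeneous hinj
      (fun J j hJ hcard => (branch_mem_candidates fun v _ => hx v).2 J hJ hcard) hY⟩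

end ErdosRado

/-- The Erdős–Rado theorem: for every infinite cardinal `κ` and `n ≥ 1`,
`(beth_{n-1}(κ))⁺ → (κ⁺)^n_κ`. -/
theorem stmt1 (κ : Cardinal) (hκ : ℵ₀ ≤ κ) (n : ℕ) (hn : 1 ≤ n)
    (α C : Type) (hα : #α = Order.succ ((fun x : Cardinal => 2 ^ x)^[n - 1] κ))
    (hC : #C = κ) (f : Finset α → C) :
    ∃ X : Set α, Order.succ κ ≤ #X ∧
      ∀ s t : Finset α, ↑s ⊆ X → ↑t ⊆ X → s.card = n → t.card = n → f s = f t := by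
  obtain ⟨m, rfl⟩ : ∃ m, n = m + 1 := ⟨n - 1, by omega⟩
  exact ErdosRado.erdos_rado hκ m (by simpa using hα.ge) hC.le f
end

section
/- Assume the Erdős–Rado theorem in forms λ₁ → (λ₂)^n_κ with λ₁ = (beth_{n(n+2)-1}(κ))^+, and the polarized relation λ₁ →^{λ₂-or} (λ₂)^n_κ for λ₂ = (beth_{n-1}(κ))^+ disjoint linear orders, and λ₂ → (κ^+)^n_κ. Then the structural partition relation for convexly ordered equivalence relations λ₁ →^{ceq} (κ^+)^n_κ follows. -/
open Cardinal

/-- The ordinary partition relation `lam → (mu)^n_kap`, stated for colorings of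
increasing `n`-tuples of a linear order. -/
def ArrowOrd (lam mu kap : Cardinal) (n : ℕ) : Prop :=
  ∀ (α : Type) [LinearOrder α], #α = lam → ∀ (C : Type), #C = kap →
    ∀ c : (Fin n → α) → C,
      ∃ X : Set α, mu ≤ #X ∧
        ∀ x y : Fin n → α, StrictMono x → StrictMono y →
          (∀ i, x i ∈ X) → (∀ i, y i ∈ X) → c x = c y

/-- The structural partition relation `lam →^{chi-or} (mu)^n_kap` for `chi` disjoint
linear orders: a `lam`-big structure (every part of size ≥ `lam`) colored with `kap`
colors has a `mu`-big type-homogeneous substructure, where the color of an increasing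
tuple is determined by which parts its coordinates lie in. -/
def ArrowPart (lam mu kap chi : Cardinal) (n : ℕ) : Prop :=
  ∀ (α : Type) [LinearOrder α] (β : Type) [LinearOrder β], #β = chi →
    ∀ P : α → β, Monotone P → (∀ b : β, lam ≤ #(P ⁻¹' {b})) →
      ∀ (C : Type), #C = kap → ∀ c : (Fin n → α) → C,
        ∃ X : Set α, (∀ b : β, mu ≤ #↥(X ∩ P ⁻¹' {b})) ∧
          ∀ x y : Fin n → α, StrictMono x → StrictMono y →
            (∀ i, x i ∈ X) → (∀ i, y i ∈ X) →
            (∀ i, P (x i) = P (y i)) → c x = c y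

/-- The structural partition relation `lam →^{ceq} (mu)^n_kap` for convexly ordered
equivalence relations: `lam`-big means at least `lam` classes each of size ≥ `lam`,
and type-homogeneity means the color of an increasing tuple depends only on the
equivalence pattern among its coordinates. -/
def ArrowCeq (lam mu kap : Cardinal) (n : ℕ) : Prop :=
  ∀ (I : Type) [LinearOrder I] (E : I → I → Prop), Equivalence E →
    (∀ x y z : I, E x z → x < y → y < z → E x y) →
    lam ≤ #(Quot E) → (∀ x : I, lam ≤ #{y : I // E x y}) →
    ∀ (C : Type), #C = kap → ∀ c : (Fin n → I) → C,
      ∃ S : Set I,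
        mu ≤ #(Quot (fun x y : S => E x.1 y.1)) ∧
        (∀ x : S, mu ≤ #{y : S // E x.1 y.1}) ∧
        ∀ x y : Fin n → I, StrictMono x → StrictMono y →
          (∀ k, x k ∈ S) → (∀ k, y k ∈ S) →
          (∀ k l, E (x k) (x l) ↔ E (y k) (y l)) → c x = c y

/-!
Choose `λ₂` classes with representatives `T`. On the union of these classes, sending a point to
its representative is a monotone map whose fibres are the classes, so the polarized relation gives
a set `X`, still `λ₂`-big in every class, on which the colour of an increasing tuple depends only
on the classes of its entries. Fix in each class `t` an increasing `n`-tuple `g t` from `X` and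
colour an increasing `n`-tuple `t` of representatives by `s ↦ c (i ↦ g (t (s i)) i)`, where `s`
ranges over the maps `Fin n → Fin n`; `λ₂ → (κ⁺)^n_κ` yields a homogeneous set `Y` of `κ⁺`
representatives. After discarding the finitely many points of `Y` without `n` larger points in
`Y`, an increasing tuple `x` from the remaining classes can be padded to an increasing tuple of
`Y` listing the classes of `x` first, so the colour of `x` is the common colour of `Y` evaluated
at the block map of the equivalence pattern of `x`.
-/

theorem Set.Infinite.exists_strictMono_fin {α : Type*} [LinearOrder α] {s : Set α}
    (hs : s.Infinite) (n : ℕ) : ∃ f : Fin n → α, StrictMono f ∧ ∀ i, f i ∈ s := by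
  obtain ⟨F, hFs, hF⟩ := hs.exists_subset_card_eq n
  exact ⟨F.orderEmbOfFin hF, (F.orderEmbOfFin hF).strictMono,
    fun i => hFs (F.orderEmbOfFin_mem hF i)⟩

-- `s` numbers the `q`-blocks of `ι` consecutively from `0`.
structure IsBlockMap {ι : Type*} [Preorder ι] {n : ℕ} (q : ι → ι → Prop) (s : ι → Fin n) :
    Prop where
  monotone : Monotone s
  eq_iff : ∀ i j, s i = s j ↔ q i j
  mem_range_of_le : ∀ i j, j ≤ s i → j ∈ Set.range s

theorem exists_isBlockMap {β : Type*} [LinearOrder β] {n : ℕ} {f : Fin n → β}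
    (hf : Monotone f) : ∃ s : Fin n → Fin n, IsBlockMap (fun i j => f i = f j) s := by
  set F := Finset.univ.image f
  have hF : F.card ≤ n := Finset.card_image_le.trans_eq (Finset.card_fin n)
  have hmem : ∀ i, f i ∈ F := fun i => Finset.mem_image_of_mem f (Finset.mem_univ i)
  let e := F.orderIsoOfFin rfl
  refine ⟨fun i => Fin.castLE hF (e.symm ⟨f i, hmem i⟩), ⟨fun i j hij => ?_, fun i j => ?_, ?_⟩⟩
  · exact (Fin.strictMono_castLE hF).monotone (e.symm.monotone (Subtype.mk_le_mk.mpr (hf hij)))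
  · simp [Fin.castLE_inj]
  · intro i j hj
    have hj : (j : ℕ) < F.card := (Fin.le_def.mp hj).trans_lt (e.symm _).isLt
    obtain ⟨i', -, hi'⟩ := Finset.mem_image.mp (e ⟨j, hj⟩).2
    refine ⟨i', Fin.ext ?_⟩
    simp [hi']

-- Depends on the pattern `q` alone, so tuples with the same equivalence pattern share it.
noncomputable def blockMap {n : ℕ} (q : Fin n → Fin n → Prop) : Fin n → Fin n :=
  open Classical in if h : ∃ s : Fin n → Fin n, IsBlockMap q s then h.choose else id

theorem isBlockMap_blockMap {n : ℕ} {q : Fin n → Fin n → Prop}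
    (h : ∃ s : Fin n → Fin n, IsBlockMap q s) : IsBlockMap q (blockMap q) := by
  rw [blockMap, dif_pos h]
  exact h.choose_spec

theorem IsBlockMap.exists_strictMono_comp_eq {ι β : Type*} [LinearOrder ι] [PartialOrder β]
    {n : ℕ} {f : ι → β} {s : ι → Fin n} (hs : IsBlockMap (fun i j => f i = f j) s)
    (hf : Monotone f) {Y : Set β} (hfY : ∀ i, f i ∈ Y) {u : Fin n → β} (hu : StrictMono u)
    (huY : ∀ k, u k ∈ Y) (hfu : ∀ i k, f i < u k) :
    ∃ t : Fin n → β, StrictMono t ∧ (∀ k, t k ∈ Y) ∧ t ∘ s = f := by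
  classical
  let t : Fin n → β := fun k => if h : k ∈ Set.range s then f h.choose else u k
  have ht_s : ∀ i, t (s i) = f i := fun i => by
    have h : s i ∈ Set.range s := ⟨i, rfl⟩
    simp only [t, dif_pos h]
    exact (hs.eq_iff _ _).mp h.choose_spec
  have ht_u : ∀ k ∉ Set.range s, t k = u k := fun k hk => dif_neg hk
  refine ⟨t, fun k l hkl => ?_, fun k => ?_, funext ht_s⟩
  · by_cases hl : l ∈ Set.range s
    · obtain ⟨j, rfl⟩ := hl
      obtain ⟨i, rfl⟩ := hs.mem_range_of_le j k hkl.le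
      rw [ht_s, ht_s]
      exact (hf (hs.monotone.reflect_lt hkl).le).lt_of_ne (mt (hs.eq_iff i j).mpr hkl.ne)
    · rw [ht_u l hl]
      by_cases hk : k ∈ Set.range s
      · obtain ⟨i, rfl⟩ := hk
        rw [ht_s]
        exact hfu i l
      · rw [ht_u k hk]
        exact hu hkl
  · by_cases hk : k ∈ Set.range s
    · obtain ⟨i, rfl⟩ := hk
      rw [ht_s]
      exact hfY i
    · rw [ht_u k hk]
      exact huY k

def HasTupleAbove {β : Type*} [Preorder β] (Y : Set β) (n : ℕ) (b : β) : Prop :=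
  ∃ u : Fin n → β, StrictMono u ∧ ∀ k, u k ∈ Y ∧ b < u k

theorem finite_setOf_not_hasTupleAbove {β : Type*} [LinearOrder β] (Y : Set β) (n : ℕ) :
    {y ∈ Y | ¬ HasTupleAbove Y n y}.Finite := by
  by_contra h
  obtain ⟨v, hv, hvB⟩ := Set.Infinite.exists_strictMono_fin h (n + 1)
  exact (hvB 0).2 ⟨v ∘ Fin.succ, hv.comp Fin.strictMono_succ,
    fun k => ⟨(hvB _).1, hv (Fin.succ_pos k)⟩⟩

theorem le_mk_setOf_hasTupleAbove {β : Type*} [LinearOrder β] {Y : Set β} {mu : Cardinal}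
    (hmu : ℵ₀ ≤ mu) (hY : mu ≤ #Y) (n : ℕ) : mu ≤ #{y ∈ Y | HasTupleAbove Y n y} := by
  by_contra! h
  have hbad : #{y ∈ Y | ¬ HasTupleAbove Y n y} < mu :=
    (Cardinal.lt_aleph0_iff_set_finite.mpr (finite_setOf_not_hasTupleAbove Y n)).trans_le hmu
  refine (hY.trans ?_).not_gt (Cardinal.add_lt_of_lt hmu h hbad)
  refine (Cardinal.mk_le_mk_of_subset fun y hy => ?_).trans (Cardinal.mk_union_le _ _)
  by_cases hgood : HasTupleAbove Y n y
  exacts [Or.inl ⟨hy, hgood⟩, Or.inr ⟨hy, hgood⟩]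

theorem exists_strictMono_above_of_hasTupleAbove {β : Type*} [Preorder β] {Y : Set β} {n : ℕ}
    {R : Fin n → β} (hR : Monotone R) (hRY : ∀ i, HasTupleAbove Y n (R i)) :
    ∃ u : Fin n → β, StrictMono u ∧ ∀ k, u k ∈ Y ∧ ∀ i, R i < u k := by
  cases n with
  | zero => exact ⟨R, fun i => i.elim0, fun k => k.elim0⟩
  | succ n =>
    obtain ⟨u, hu, huY⟩ := hRY (Fin.last n)
    exact ⟨u, hu, fun k => ⟨(huY k).1, fun i => (hR (Fin.le_last i)).trans_lt (huY k).2⟩⟩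

universe u

theorem Cardinal.mk_arrow_eq_of_finite {D C : Type u} [Finite D] [Nonempty D] (hC : ℵ₀ ≤ #C) :
    #(D → C) = #C := by
  have := Fintype.ofFinite D
  rw [← Cardinal.power_def, Cardinal.mk_fintype D, Cardinal.power_natCast,
    Cardinal.power_nat_eq hC Fintype.card_pos]

theorem strictMono_fiber_tuple {ι α β : Type*} [Preorder ι] [LinearOrder α] [PartialOrder β]
    {P : α → β} (hP : Monotone P) {g : β → ι → α} (hg : ∀ b, StrictMono (g b))
    (hgP : ∀ b i, P (g b i) = b) {R : ι → β} (hR : Monotone R) :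
    StrictMono fun i => g (R i) i := by
  intro i j hij
  rcases (hR hij.le).eq_or_lt with h | h
  · simp only [h]
    exact hg _ hij
  · exact hP.reflect_lt (by rwa [hgP, hgP])

theorem Equivalence.rel_out_mk {α : Type*} {r : α → α → Prop} (hr : Equivalence r) (a : α) :
    r a (Quot.mk r a).out :=
  hr.symm (hr.eqvGen_iff.mp (Quot.eq.mp (Quot.out_eq (Quot.mk r a))))

section ConvexEquivalence

variable {I : Type*} {E : I → I → Prop}

theorem lt_of_not_rel_of_rel [LinearOrder I] (hE : Equivalence E)
    (hconv : ∀ x y z : I, E x z → x < y → y < z → E x y) {a b a' b' : I} (hab : a < b)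
    (hnab : ¬ E a b) (ha : E a a') (hb : E b b') : a' < b' := by
  by_contra! h
  apply hnab
  rcases lt_trichotomy b' a with hb'a | rfl | hab'
  · exact hE.trans (hE.symm (hconv b' a b (hE.symm hb) hb'a hab)) (hE.symm hb)
  · exact hE.symm hb
  · have hab' : E a b' := h.lt_or_eq.elim (hconv a b' a' ha hab') fun h => h ▸ ha
    exact hE.trans hab' (hE.symm hb)

variable (E) in
noncomputable def classRep (Q : Set (Quot E)) (a : Quot.mk E ⁻¹' Q) : Quot.out '' Q :=
  ⟨(Quot.mk E a.1).out, Set.mem_image_of_mem _ a.2⟩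

variable {Q : Set (Quot E)}

theorem classRep_eq_classRep_iff (hE : Equivalence E) {a b : Quot.mk E ⁻¹' Q} :
    classRep E Q a = classRep E Q b ↔ E a b := by
  rw [classRep, classRep, Subtype.mk.injEq,
    (Function.LeftInverse.injective (f := Quot.out) (g := Quot.mk E) Quot.out_eq).eq_iff, Quot.eq,
    hE.eqvGen_iff]

theorem monotone_classRep [LinearOrder I] (hE : Equivalence E)
    (hconv : ∀ x y z : I, E x z → x < y → y < z → E x y) : Monotone (classRep E Q) := by
  intro a b hab
  by_cases h : E a b
  · exact ((classRep_eq_classRep_iff hE).mpr h).le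
  · have hlt : (a : I) < b := hab.lt_of_ne fun h' => h (h' ▸ hE.refl _)
    exact (lt_of_not_rel_of_rel hE hconv hlt h (hE.rel_out_mk a) (hE.rel_out_mk b)).le

theorem mk_rel_le_mk_classRep_preimage (t : Quot.out '' Q) :
    #{y // E t y} ≤ #(classRep E Q ⁻¹' {t}) := by
  obtain ⟨_, q, hq, rfl⟩ := t
  have hmk : ∀ y : {y // E q.out y}, Quot.mk E y = q := fun y =>
    (Quot.sound y.2).symm.trans (Quot.out_eq q)
  refine Cardinal.mk_le_of_injective
    (f := fun y => ⟨⟨y, by rw [Set.mem_preimage, hmk y]; exact hq⟩, by simp [classRep, hmk y]⟩)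
    fun y y' h => Subtype.ext (congrArg (fun z => z.1.1) h)

end ConvexEquivalence

-- `ArrowCeq lam mu kap n` unfolds to the existence of such an `S`.
def CeqHomogeneous {I : Type u} [Preorder I] (E : I → I → Prop) (mu : Cardinal.{u}) {C : Type*}
    {n : ℕ} (c : (Fin n → I) → C) (S : Set I) : Prop :=
  mu ≤ #(Quot (fun x y : S => E x.1 y.1)) ∧
    (∀ x : S, mu ≤ #{y : S // E x.1 y.1}) ∧
    ∀ x y : Fin n → I, StrictMono x → StrictMono y →
      (∀ k, x k ∈ S) → (∀ k, y k ∈ S) →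
      (∀ k l, E (x k) (x l) ↔ E (y k) (y l)) → c x = c y

theorem CeqHomogeneous.image {α I : Type u} [LinearOrder α] [Preorder I] {f : α → I}
    (hf : StrictMono f) {E : I → I → Prop} {mu : Cardinal.{u}} {C : Type*} {n : ℕ}
    {c : (Fin n → I) → C} {S : Set α}
    (h : CeqHomogeneous (fun a b => E (f a) (f b)) mu (fun x => c (f ∘ x)) S) :
    CeqHomogeneous E mu c (f '' S) := by
  obtain ⟨hquot, hclass, hhom⟩ := h
  let e : S ≃ f '' S := Equiv.Set.image f S hf.injective
  have hquot' : #(Quot fun a b : S => E (f a) (f b)) = #(Quot fun x y : f '' S => E x.1 y.1) :=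
    Cardinal.mk_congr (Quot.congr e fun _ _ => Iff.rfl)
  refine ⟨hquot.trans_eq hquot', fun z => ?_, ?_⟩
  · obtain ⟨a, rfl⟩ := e.surjective z
    exact (hclass a).trans_eq (Cardinal.mk_congr (e.subtypeEquiv fun _ => Iff.rfl))
  · intro x y hx hy hxS hyS hxy
    choose x' hx'S hx' using hxS
    choose y' hy'S hy' using hyS
    obtain rfl : f ∘ x' = x := funext hx'
    obtain rfl : f ∘ y' = y := funext hy'
    exact hhom x' y' (fun k l hkl => hf.lt_iff_lt.mp (hx hkl))
      (fun k l hkl => hf.lt_iff_lt.mp (hy hkl)) hx'S hy'S hxy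

section MonotonePartition

variable {α β : Type*} [LinearOrder α] [LinearOrder β] {P : α → β} {n : ℕ} {C : Type*}
  {c : (Fin n → α) → C}

theorem patternHomogeneous_of_fiber_tuples (hP : Monotone P) {X : Set α}
    (hX : ∀ x y : Fin n → α, StrictMono x → StrictMono y → (∀ i, x i ∈ X) → (∀ i, y i ∈ X) →
      (∀ i, P (x i) = P (y i)) → c x = c y)
    {g : β → Fin n → α} (hg : ∀ b, StrictMono (g b)) (hgX : ∀ b i, g b i ∈ X ∩ P ⁻¹' {b})
    {Y : Set β} (hY : ∀ t t' : Fin n → β, StrictMono t → StrictMono t' → (∀ k, t k ∈ Y) →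
      (∀ k, t' k ∈ Y) →
      (fun s : Fin n → Fin n => c fun i => g (t (s i)) i) = fun s => c fun i => g (t' (s i)) i)
    (x y : Fin n → α) (hx : StrictMono x) (hy : StrictMono y)
    (hxS : ∀ k, x k ∈ X ∩ P ⁻¹' {b ∈ Y | HasTupleAbove Y n b})
    (hyS : ∀ k, y k ∈ X ∩ P ⁻¹' {b ∈ Y | HasTupleAbove Y n b})
    (hxy : ∀ k l, P (x k) = P (x l) ↔ P (y k) = P (y l)) : c x = c y := by
  have lift : ∀ z : Fin n → α, StrictMono z →
      (∀ k, z k ∈ X ∩ P ⁻¹' {b ∈ Y | HasTupleAbove Y n b}) →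
      ∃ t, StrictMono t ∧ (∀ k, t k ∈ Y) ∧
        c z = c fun i => g (t (blockMap (fun k l => P (z k) = P (z l)) i)) i := by
    intro z hz hzS
    have hR : Monotone (P ∘ z) := hP.comp hz.monotone
    obtain ⟨u, hu, huY⟩ := exists_strictMono_above_of_hasTupleAbove hR fun i => (hzS i).2.2
    obtain ⟨t, ht, htY, hts⟩ :=
      (isBlockMap_blockMap (exists_isBlockMap hR)).exists_strictMono_comp_eq hR
        (fun i => (hzS i).2.1) hu (fun k => (huY k).1) fun i k => (huY k).2 i
    refine ⟨t, ht, htY, ?_⟩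
    have hts : ∀ i, t (blockMap (fun k l => P (z k) = P (z l)) i) = P (z i) := congrFun hts
    simp only [hts]
    exact hX _ _ hz (strictMono_fiber_tuple hP hg (fun b i => (hgX b i).2) hR)
      (fun k => (hzS k).1) (fun k => (hgX _ k).1) fun i => (hgX _ i).2.symm
  obtain ⟨t, ht, htY, hcx⟩ := lift x hx hxS
  obtain ⟨t', ht', ht'Y, hcy⟩ := lift y hy hyS
  have hpat : (fun k l => P (x k) = P (x l)) = fun k l => P (y k) = P (y l) :=
    funext₂ fun k l => propext (hxy k l)
  rw [hcx, hcy, hpat]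
  exact congrFun (hY t t' ht ht' htY ht'Y) _

end MonotonePartition

theorem exists_ceqHomogeneous_of_monotone {α β : Type} [LinearOrder α] [LinearOrder β]
    {P : α → β} (hP : Monotone P) {lam1 lam2 mu kap : Cardinal} {n : ℕ} (hβ : #β = lam2)
    (hfib : ∀ b, lam1 ≤ #(P ⁻¹' {b})) (hpart : ArrowPart lam1 lam2 kap lam2 n)
    (hord : ArrowOrd lam2 mu kap n) (hkap : ℵ₀ ≤ kap) (hmu : ℵ₀ ≤ mu) (hmulam : mu ≤ lam2)
    {C : Type} (hC : #C = kap) (c : (Fin n → α) → C) :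
    ∃ S, CeqHomogeneous (fun a b => P a = P b) mu c S := by
  obtain ⟨X, hXbig, hX⟩ := hpart α β hβ P hP hfib C hC c
  have hXmu : ∀ b, mu ≤ #↥(X ∩ P ⁻¹' {b}) := fun b => hmulam.trans (hXbig b)
  have hXinf : ∀ b, (X ∩ P ⁻¹' {b}).Infinite := fun b =>
    Set.infinite_coe_iff.mp (Cardinal.infinite_iff.mpr (hmu.trans (hXmu b)))
  choose g hg hgX using fun b => (hXinf b).exists_strictMono_fin n
  have hcolors : #((Fin n → Fin n) → C) = kap := by
    have : Nonempty (Fin n → Fin n) := ⟨id⟩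
    rw [Cardinal.mk_arrow_eq_of_finite (hC ▸ hkap), hC]
  obtain ⟨Y, hYbig, hY⟩ := hord β hβ _ hcolors fun t s => c fun i => g (t (s i)) i
  set Y' := {b ∈ Y | HasTupleAbove Y n b}
  refine ⟨X ∩ P ⁻¹' Y', ?_, fun a => ?_,
    patternHomogeneous_of_fiber_tuples hP hX hg hgX hY⟩
  · calc mu ≤ #Y' := le_mk_setOf_hasTupleAbove hmu hYbig n
      _ ≤ #(Set.range fun a : ↥(X ∩ P ⁻¹' Y') => P a) := by
        refine Cardinal.mk_le_mk_of_subset fun b hb => ?_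
        obtain ⟨w, hwX, hwb⟩ := (hXinf b).nonempty
        have hwb : P w = b := hwb
        exact ⟨⟨w, hwX, show P w ∈ Y' from hwb ▸ hb⟩, hwb⟩
      _ = _ := (Cardinal.mk_congr (Setoid.quotientKerEquivRange _)).symm
  · refine (hXmu (P a)).trans (Cardinal.mk_le_of_injective
      (f := fun z => ⟨⟨z, z.2.1, by rw [Set.mem_preimage, (z.2.2 : P z = P a)]; exact a.2.2⟩,
        (z.2.2 : P z = P a).symm⟩) ?_)
    intro z z' h
    exact Subtype.ext (congrArg (fun w => w.1.1) h)

theorem stmt4_general (κ : Cardinal) (hκ : ℵ₀ ≤ κ) (n : ℕ)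
    (h2 : ArrowPart (Order.succ ((fun x : Cardinal => 2 ^ x)^[n * (n + 2) - 1] κ))
      (Order.succ ((fun x : Cardinal => 2 ^ x)^[n - 1] κ)) κ
      (Order.succ ((fun x : Cardinal => 2 ^ x)^[n - 1] κ)) n)
    (h3 : ArrowOrd (Order.succ ((fun x : Cardinal => 2 ^ x)^[n - 1] κ))
      (Order.succ κ) κ n) :
    ArrowCeq (Order.succ ((fun x : Cardinal => 2 ^ x)^[n * (n + 2) - 1] κ))
      (Order.succ κ) κ n := by
  intro I _ E hE hconv hQ hcls C hC c
  have hid : id ≤ fun x : Cardinal => 2 ^ x := fun x => (Cardinal.cantor x).le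
  have hκ₂ : Order.succ κ ≤ Order.succ ((fun x : Cardinal => 2 ^ x)^[n - 1] κ) :=
    Order.succ_le_succ (Function.id_le_iterate_of_id_le hid _ κ)
  have h₂₁ : Order.succ ((fun x : Cardinal => 2 ^ x)^[n - 1] κ) ≤
      Order.succ ((fun x : Cardinal => 2 ^ x)^[n * (n + 2) - 1] κ) :=
    Order.succ_le_succ (Function.monotone_iterate_of_id_le hid
      (Nat.sub_le_sub_right (Nat.le_mul_of_pos_right n (by omega)) 1) κ)
  obtain ⟨Q, hQ⟩ := Cardinal.le_mk_iff_exists_set.mp (h₂₁.trans hQ)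
  have hT : #(Quot.out '' Q) = #Q := Cardinal.mk_image_eq
    (Function.LeftInverse.injective (f := Quot.out) (g := Quot.mk E) Quot.out_eq)
  obtain ⟨S, hS⟩ := exists_ceqHomogeneous_of_monotone (monotone_classRep hE hconv) (hT.trans hQ)
    (fun t => (hcls t).trans (mk_rel_le_mk_classRep_preimage t)) h2 h3 hκ
    (hκ.trans (Order.le_succ κ)) hκ₂ hC fun x => c (Subtype.val ∘ x)
  simp only [classRep_eq_classRep_iff hE] at hS
  exact ⟨Subtype.val '' S, hS.image (Subtype.strictMono_coe _)⟩

/-- Given the Erdős–Rado theorem `λ₁ → (λ₂)^n_κ` with `λ₁ = beth_{n(n+2)-1}(κ)⁺`, the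
polarized partition relation `λ₁ →^{λ₂-or} (λ₂)^n_κ` for `λ₂ = beth_{n-1}(κ)⁺` disjoint
linear orders, and `λ₂ → (κ⁺)^n_κ`, the structural partition relation
`λ₁ →^{ceq} (κ⁺)^n_κ` for convexly ordered equivalence relations follows. -/
theorem stmt4 (κ : Cardinal) (hκ : ℵ₀ ≤ κ) (n : ℕ) (hn : 1 ≤ n)
    (h1 : ArrowOrd (Order.succ ((fun x : Cardinal => 2 ^ x)^[n * (n + 2) - 1] κ))
      (Order.succ ((fun x : Cardinal => 2 ^ x)^[n - 1] κ)) κ n)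
    (h2 : ArrowPart (Order.succ ((fun x : Cardinal => 2 ^ x)^[n * (n + 2) - 1] κ))
      (Order.succ ((fun x : Cardinal => 2 ^ x)^[n - 1] κ)) κ
      (Order.succ ((fun x : Cardinal => 2 ^ x)^[n - 1] κ)) n)
    (h3 : ArrowOrd (Order.succ ((fun x : Cardinal => 2 ^ x)^[n - 1] κ))
      (Order.succ κ) κ n) :
    ArrowCeq (Order.succ ((fun x : Cardinal => 2 ^ x)^[n * (n + 2) - 1] κ))
      (Order.succ κ) κ n :=
  stmt4_general κ hκ n h2 h3
end

section
/- Let T be the theory of the direct sum of countably many copies of the Prüfer p-group Z(p^∞). Every model of T is isomorphic to a direct sum of copies of Z(p^∞) and copies of ℚ, i.e., of the form ⊕_{i∈I} Z(p^∞) ⊕ ⊕_{j∈J} ℚ for some index sets I (infinite) and J. -/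
open FirstOrder

/-- The first-order language of (additive) groups: a constant `0`, a unary function `-`,
and a binary function `+`. -/
def abLang : FirstOrder.Language where
  Functions := fun n =>
    match n with
    | 0 => Unit
    | 1 => Unit
    | 2 => Unit
    | _ + 3 => Empty
  Relations := fun _ => Empty

/-- Every additive group is an `abLang`-structure in the natural way. -/
instance abLangStructure (G : Type) [AddGroup G] : abLang.Structure G where
  funMap {n} f x :=
    match n, f, x with
    | 0, _, _ => 0
    | 1, _, x => -(x 0)
    | 2, _, x => x 0 + x 1
  RelMap {n} r _ := r.elim

/-- The Prüfer `p`-group `Z(p^∞)`: the `p`-primary component of `ℚ/ℤ`. -/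
abbrev PruferGroup (p : ℕ) [Fact p.Prime] : Type :=
  ↥(AddCommGroup.primaryComponent (AddCircle (1 : ℚ)) p)

/-!
The first-order sentences "`n • _` is surjective" (`n ≠ 0`), "`n • _` is injective" (`n` coprime
to `p`) and "there are `k` distinct elements killed by `p`" hold in `⊕_{n<ω} Z(p^∞)`, so a model
`G` is a divisible group whose torsion is `p`-primary and whose socle `G[p]` is infinite. Fix an
`𝔽_p`-basis `I` of `G[p]`. Since `G` is an injective `ℤ`-module, the embedding
`⊕_I ℤ/p ≅ G[p] ⊆ G` extends along `⊕_I ℤ/p ⊆ ⊕_I Z(p^∞)` to a map `⊕_I Z(p^∞) → G`, which is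
injective because it is injective on socles. Its image is divisible, hence a direct summand; a
complement meets `G[p]` trivially, so it is torsion-free and divisible, i.e. a `ℚ`-vector space
`⊕_J ℚ`.
-/

open AddCommGroup

theorem infinite_iff_forall_exists_injective_fin {α : Type*} :
    Infinite α ↔ ∀ k : ℕ, ∃ f : Fin k → α, Function.Injective f := by
  refine ⟨fun _ k => ⟨_, (Fin.valEmbedding.trans (Infinite.natEmbedding α)).injective⟩,
    fun h => not_finite_iff_infinite.mp fun _ => ?_⟩
  obtain ⟨f, hf⟩ := h (Nat.card α + 1)
  simpa using Nat.card_le_card_of_injective f hf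

theorem Module.Basis.infinite_index {ι R M : Type*} [Semiring R] [Finite R] [AddCommMonoid M]
    [Module R M] [Infinite M] (b : Module.Basis ι R M) : Infinite ι :=
  not_finite_iff_infinite.mp fun _ =>
    have := Module.Finite.of_basis b
    have := Module.finite_of_finite R (M := M)
    not_finite M

theorem Finsupp.exists_mapRange_eq {ι M N : Type*} [AddCommMonoid M] [AddCommMonoid N]
    {f : M →+ N} (hf : Function.Injective f) {y : ι →₀ N}
    (hy : ∀ i, y i ∈ Set.range f) : ∃ z, mapRange.addMonoidHom f z = y := by
  have h0 : Function.invFun f 0 = 0 := by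
    simpa using Function.leftInverse_invFun hf 0
  exact ⟨y.mapRange _ h0, by ext i; simpa using Function.invFun_eq (hy i)⟩

section Divisible

noncomputable instance Finsupp.divisibleBy {ι M : Type*} [AddCommGroup M] [DivisibleBy M ℤ] :
    DivisibleBy (ι →₀ M) ℤ :=
  divisibleByOfSMulRightSurj _ _ fun {n} hn f => by
    obtain ⟨g, rfl⟩ :=
      Finsupp.mapRange_surjective _ (smul_zero n) (DivisibleBy.surjective_smul M ℤ hn) f
    exact ⟨g, by ext; simp⟩

variable {H : Type*} [AddCommGroup H] {p : ℕ}

theorem exists_mem_primaryComponent_nsmul_eq [DivisibleBy H ℤ] [hp : Fact p.Prime]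
    {n : ℕ} (hn : n ≠ 0) {y : H} (hy : y ∈ primaryComponent H p) :
    ∃ z ∈ primaryComponent H p, n • z = y := by
  obtain ⟨k, hk⟩ := hy
  obtain ⟨a, u, hu, rfl⟩ := Nat.exists_eq_pow_mul_and_not_dvd hn p hp.out.ne_one
  obtain ⟨c, d, hcd⟩ : IsCoprime (u : ℤ) ((p ^ k : ℕ) : ℤ) :=
    Nat.isCoprime_iff_coprime.mpr ((hp.out.coprime_iff_not_dvd.mpr hu).symm.pow_right k)
  -- `u` is invertible modulo the order of `y`, with inverse `c`; divide `c • y` by `p ^ a`.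
  have hy : (c * u) • y = y := by
    rw [show c * u = 1 - d * (p ^ k : ℕ) by linarith, sub_zsmul, one_zsmul, mul_zsmul,
      natCast_zsmul, hk, zsmul_zero, neg_zero, add_zero]
  obtain ⟨z, hz⟩ := DivisibleBy.surjective_smul H ℤ
    (Int.natCast_ne_zero.mpr (pow_ne_zero a hp.out.ne_zero)) (c • y)
  simp only [natCast_zsmul] at hz
  refine ⟨z, ⟨a + k, ?_⟩, ?_⟩
  · rw [pow_add, mul_nsmul, hz, smul_comm, hk, smul_zero]
  · rw [mul_nsmul, hz, ← natCast_zsmul, smul_smul, mul_comm, hy]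

noncomputable instance AddCommGroup.primaryComponent.divisibleBy [DivisibleBy H ℤ]
    [Fact p.Prime] : DivisibleBy (primaryComponent H p) ℤ :=
  have : DivisibleBy (primaryComponent H p) ℕ := divisibleByOfSMulRightSurj _ _ fun hn y => by
    obtain ⟨z, hz, hzy⟩ := exists_mem_primaryComponent_nsmul_eq hn y.2
    exact ⟨⟨z, hz⟩, Subtype.ext hzy⟩
  AddGroup.divisibleByIntOfDivisibleByNat _

theorem DivisibleHull.coe_surjective [DivisibleBy H ℤ] [IsAddTorsionFree H] :
    Function.Surjective ((↑) : H → DivisibleHull H) := by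
  intro x
  induction x with | mk m s
  obtain ⟨y, rfl⟩ := DivisibleBy.surjective_smul H ℤ (n := (s : ℕ)) (by simp) m
  exact ⟨y, by simp [DivisibleHull.mk_eq_mk_iff_smul_eq_smul]⟩

theorem exists_addEquiv_finsupp_rat (M : Type) [AddCommGroup M] [DivisibleBy M ℤ]
    [IsAddTorsionFree M] : ∃ J : Type, Nonempty (M ≃+ (J →₀ ℚ)) :=
  ⟨_, ⟨(AddEquiv.ofBijective (DivisibleHull.coeAddMonoidHom M)
    ⟨DivisibleHull.coe_injective, DivisibleHull.coe_surjective⟩).trans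
    (Module.Basis.ofVectorSpace ℚ (DivisibleHull M)).repr.toAddEquiv⟩⟩

theorem Submodule.exists_isCompl_of_divisibleBy (A : Submodule ℤ H) [DivisibleBy A ℤ] :
    ∃ K : Submodule ℤ H, IsCompl A K := by
  obtain ⟨r, hr⟩ := (Module.Baer.of_divisible A).extension_property A.subtype
    A.injective_subtype LinearMap.id
  exact ⟨_, LinearMap.isCompl_of_proj (f := r) fun x => LinearMap.congr_fun hr x⟩

end Divisible

section Primary

variable {A : Type*} [AddCommGroup A] {p : ℕ}

theorem AddSubgroup.eq_zero_of_pow_nsmul_eq_zero {S : AddSubgroup A}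
    (hS : ∀ a ∈ S, p • a = 0 → a = 0) (k : ℕ) : ∀ {a}, a ∈ S → p ^ k • a = 0 → a = 0 := by
  induction k with
  | zero => intro a _ h; simpa using h
  | succ k ih =>
    intro a ha h
    exact hS a ha (ih (S.nsmul_mem ha p) (by rwa [smul_smul, ← pow_succ]))

theorem AddMonoidHom.injective_of_socle {B : Type*} [AddCommGroup B] {f : A →+ B}
    (hA : ∀ a : A, a ∈ primaryComponent A p) (hf : ∀ a, p • a = 0 → f a = 0 → a = 0) :
    Function.Injective f :=
  (injective_iff_map_eq_zero f).mpr fun a ha =>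
    let ⟨k, hk⟩ := hA a
    AddSubgroup.eq_zero_of_pow_nsmul_eq_zero (S := f.ker) (fun a ha h => hf a h ha) k ha hk

theorem Submodule.isAddTorsionFree_of_socle
    (hA : AddCommGroup.torsion A ≤ AddCommGroup.primaryComponent A p)
    {K : Submodule ℤ A} (hK : ∀ x ∈ K, p • x = 0 → x = 0) : IsAddTorsionFree K :=
  IsAddTorsionFree.of_not_isOfFinAddOrder fun a ha hfin => by
    obtain ⟨k, hk⟩ := hA (K.subtype.toAddMonoidHom.isOfFinAddOrder hfin)
    exact ha (Subtype.ext
      (AddSubgroup.eq_zero_of_pow_nsmul_eq_zero (S := K.toAddSubgroup) hK k a.2 hk))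

theorem Finsupp.mem_primaryComponent {ι : Type*}
    (hA : ∀ a : A, a ∈ AddCommGroup.primaryComponent A p)
    (f : ι →₀ A) : f ∈ AddCommGroup.primaryComponent (ι →₀ A) p := by
  induction f using Finsupp.induction_linear with
  | zero => exact zero_mem _
  | add f g hf hg => exact add_mem hf hg
  | single i a =>
    obtain ⟨k, hk⟩ := hA a
    exact ⟨k, by rw [smul_single, hk, single_zero]⟩

theorem eq_zero_of_nsmul_eq_zero_of_coprime {a : A} (ha : a ∈ primaryComponent A p) {n : ℕ}
    (hn : n.Coprime p) (h : n • a = 0) : a = 0 := by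
  obtain ⟨k, hk⟩ := ha
  exact AddMonoid.addOrderOf_eq_one_iff.mp (Nat.eq_one_of_dvd_coprimes (hn.pow_right k)
    (addOrderOf_dvd_of_nsmul_eq_zero h) (addOrderOf_dvd_of_nsmul_eq_zero hk))

theorem torsion_le_primaryComponent [hp : Fact p.Prime]
    (h : ∀ n : ℕ, n.Coprime p → ∀ a : A, n • a = 0 → a = 0) :
    torsion A ≤ primaryComponent A p := by
  intro a ha
  obtain ⟨n, hn, hna⟩ := isOfFinAddOrder_iff_nsmul_eq_zero.mp ha
  obtain ⟨k, u, hu, rfl⟩ := Nat.exists_eq_pow_mul_and_not_dvd hn.ne' p hp.out.ne_one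
  exact ⟨k, h u (hp.out.coprime_iff_not_dvd.mpr hu).symm _ (by rwa [smul_smul, mul_comm])⟩

theorem infinite_torsionBy_iff (n : ℕ) : Infinite (AddSubgroup.torsionBy A n) ↔
    ∀ k : ℕ, ∃ xs : Fin k → A, Function.Injective xs ∧ ∀ i, n • xs i = 0 := by
  simp_rw [infinite_iff_forall_exists_injective_fin]
  refine forall_congr' fun k => ⟨fun ⟨xs, hxs⟩ => ?_, fun ⟨xs, hxs, h⟩ => ?_⟩
  · exact ⟨_, Subtype.val_injective.comp hxs,
      fun i => AddSubgroup.torsionBy.nsmul_iff.mp (xs i).2⟩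
  · exact ⟨fun i => ⟨xs i, AddSubgroup.torsionBy.nsmul_iff.mpr (h i)⟩,
      fun i j hij => hxs (congrArg Subtype.val hij)⟩

end Primary

namespace PruferGroup

variable (p : ℕ) [hp : Fact p.Prime]

theorem mem_primaryComponent (x : PruferGroup p) : x ∈ primaryComponent (PruferGroup p) p :=
  let ⟨k, hk⟩ := x.2
  ⟨k, Subtype.ext hk⟩

noncomputable def invPrime : PruferGroup p :=
  ⟨(((p : ℚ)⁻¹ : ℚ) : AddCircle (1 : ℚ)), 1, by
    rw [pow_one, ← AddCircle.coe_nsmul (p := (1 : ℚ)), nsmul_eq_mul,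
      mul_inv_cancel₀ (by exact_mod_cast hp.out.ne_zero), AddCircle.coe_period]⟩

theorem addOrderOf_invPrime : addOrderOf (invPrime p) = p := by
  rw [← AddSubgroup.addOrderOf_coe]
  have := AddCircle.addOrderOf_coe_rat (p := (1 : ℚ)) (q := (p : ℚ)⁻¹)
  rw [mul_one, Rat.inv_natCast_den, if_neg hp.out.ne_zero] at this
  exact this

theorem mem_zmultiples_invPrime {y : PruferGroup p} (hy : p • y = 0) :
    y ∈ AddSubgroup.zmultiples (invPrime p) := by
  obtain ⟨m, -, hm⟩ := (AddCircle.nsmul_eq_zero_iff hp.out.pos).mp (congrArg Subtype.val hy)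
  refine AddSubgroup.mem_zmultiples_iff.mpr ⟨m, Subtype.ext ?_⟩
  rw [← hm]
  simp [invPrime, div_eq_mul_inv]

noncomputable def ofZMod : ZMod p →+ PruferGroup p :=
  ZMod.lift p ⟨zmultiplesHom _ (invPrime p), by
    simp [← addOrderOf_invPrime p, addOrderOf_nsmul_eq_zero]⟩

theorem ofZMod_injective : Function.Injective (ofZMod p) :=
  (ZMod.lift_injective _).mpr fun m hm => by
    rw [ZMod.intCast_zmod_eq_zero_iff_dvd, ← addOrderOf_invPrime p,
      addOrderOf_dvd_iff_zsmul_eq_zero]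
    exact hm

theorem exists_ofZMod_eq {y : PruferGroup p} (hy : p • y = 0) : ∃ k, ofZMod p k = y := by
  obtain ⟨m, rfl⟩ := AddSubgroup.mem_zmultiples_iff.mp (mem_zmultiples_invPrime p hy)
  exact ⟨m, by simp [ofZMod]⟩

theorem infinite_torsionBy_finsupp (ι : Type*) [Infinite ι] :
    Infinite (AddSubgroup.torsionBy (ι →₀ PruferGroup p) p) := by
  have hinv : p • invPrime p = 0 := by
    simpa [addOrderOf_invPrime] using addOrderOf_nsmul_eq_zero (invPrime p)
  have hne : invPrime p ≠ 0 := fun h =>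
    hp.out.ne_one (by simpa [h] using (addOrderOf_invPrime p).symm)
  refine (infinite_torsionBy_iff p).mpr fun k =>
    ⟨fun i => Finsupp.single (Infinite.natEmbedding ι i) (invPrime p), ?_, fun i => ?_⟩
  · exact (Finsupp.single_left_injective hne).comp
      ((Infinite.natEmbedding ι).injective.comp Fin.val_injective)
  · rw [Finsupp.smul_single, hinv, Finsupp.single_zero]

end PruferGroup

section Decomposition

attribute [local instance] AddSubgroup.torsionBy.zmodModule

variable {p : ℕ} [Fact p.Prime] {G : Type} [AddCommGroup G] [DivisibleBy G ℤ] {I : Type}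

theorem exists_injective_finsupp_pruferGroup
    (b : Module.Basis I (ZMod p) (AddSubgroup.torsionBy G p)) :
    ∃ Φ : (I →₀ PruferGroup p) →+ G, Function.Injective Φ ∧
      ∀ x : G, p • x = 0 → x ∈ Φ.range := by
  let χ : (I →₀ ZMod p) →+ G :=
    (AddSubgroup.torsionBy G p).subtype.comp b.repr.symm.toAddMonoidHom
  have hχ : Function.Injective χ := Subtype.val_injective.comp b.repr.symm.injective
  let ψ : (I →₀ ZMod p) →+ (I →₀ PruferGroup p) :=
    Finsupp.mapRange.addMonoidHom (PruferGroup.ofZMod p)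
  have hψ : Function.Injective ψ :=
    Finsupp.mapRange_injective _ (map_zero _) (PruferGroup.ofZMod_injective p)
  obtain ⟨Φ, hΦ⟩ := (Module.Baer.of_divisible G).extension_property_addMonoidHom ψ hψ χ
  refine ⟨Φ, ?_, fun x hx => ?_⟩
  · refine AddMonoidHom.injective_of_socle
      (Finsupp.mem_primaryComponent (PruferGroup.mem_primaryComponent p)) fun y hy hΦy => ?_
    obtain ⟨z, rfl⟩ := Finsupp.exists_mapRange_eq (PruferGroup.ofZMod_injective p)
      fun i => PruferGroup.exists_ofZMod_eq p (by simpa using congr($hy i))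
    rw [hχ (show χ z = χ 0 by rw [← hΦ, map_zero]; exact hΦy), map_zero]
  · refine ⟨ψ (b.repr ⟨x, AddSubgroup.torsionBy.nsmul_iff.mpr hx⟩), ?_⟩
    rw [← AddMonoidHom.comp_apply, hΦ]
    simp [χ]

theorem exists_addEquiv_finsupp_pruferGroup_prod (hG : torsion G ≤ primaryComponent G p)
    (b : Module.Basis I (ZMod p) (AddSubgroup.torsionBy G p)) :
    ∃ J : Type, Nonempty (G ≃+ ((I →₀ PruferGroup p) × (J →₀ ℚ))) := by
  obtain ⟨Φ, hΦ, hsocle⟩ := exists_injective_finsupp_pruferGroup b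
  let A := LinearMap.range Φ.toIntLinearMap
  let eA : (I →₀ PruferGroup p) ≃ₗ[ℤ] A := LinearEquiv.ofInjective _ hΦ
  have : DivisibleBy A ℤ :=
    Function.Surjective.divisibleBy eA eA.surjective fun x n => map_zsmul eA n x
  obtain ⟨K, hAK⟩ := A.exists_isCompl_of_divisibleBy
  have : DivisibleBy K ℤ := Function.Surjective.divisibleBy _
    (K.projectionOnto_surjective hAK.symm) fun x n => map_zsmul _ n x
  have : IsAddTorsionFree K := Submodule.isAddTorsionFree_of_socle hG fun x hxK hx =>
    (Submodule.disjoint_def.mp hAK.disjoint) x (hsocle x hx) hxK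
  obtain ⟨J, ⟨eK⟩⟩ := exists_addEquiv_finsupp_rat K
  exact ⟨J, ⟨(Submodule.prodEquivOfIsCompl A K hAK).symm.toAddEquiv.trans
    (AddEquiv.prodCongr eA.symm.toAddEquiv eK)⟩⟩

end Decomposition

namespace abLang

open Language BoundedFormula

variable {α : Type*} {G : Type} [AddGroup G]

def zero : abLang.Term α := Term.func (l := 0) () ![]

def add (t s : abLang.Term α) : abLang.Term α := Term.func (l := 2) () ![t, s]

def nsmul : ℕ → abLang.Term α → abLang.Term α
  | 0, _ => zero
  | n + 1, t => add (nsmul n t) t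

@[simp] theorem realize_zero (v : α → G) : (zero : abLang.Term α).realize v = 0 := rfl

@[simp] theorem realize_add (t s : abLang.Term α) (v : α → G) :
    (add t s).realize v = t.realize v + s.realize v := rfl

@[simp] theorem realize_nsmul (n : ℕ) (t : abLang.Term α) (v : α → G) :
    (nsmul n t).realize v = n • t.realize v := by
  induction n with
  | zero => simp [nsmul]
  | succ n ih => simp [nsmul, ih, succ_nsmul]

def divisibleSentence (n : ℕ) : abLang.Sentence :=
  ∀' ∃' (nsmul n &1 =' &0)

def nsmulInjectiveSentence (n : ℕ) : abLang.Sentence :=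
  ∀' (nsmul n &0 =' zero ⟹ &0 =' zero)

noncomputable def socleCardGeSentence (p k : ℕ) : abLang.Sentence :=
  (iInf (fun ij : {ij : Fin k × Fin k // ij.1 ≠ ij.2} => ∼(&ij.1.1 =' &ij.1.2)) ⊓
    iInf fun i => nsmul p &i =' zero).exs

theorem realize_divisibleSentence (n : ℕ) :
    G ⊨ divisibleSentence n ↔ Function.Surjective fun x : G => n • x := by
  simp [divisibleSentence, Sentence.Realize, Formula.Realize, Fin.snoc, Function.Surjective]

theorem realize_nsmulInjectiveSentence (n : ℕ) :
    G ⊨ nsmulInjectiveSentence n ↔ ∀ x : G, n • x = 0 → x = 0 := by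
  simp [nsmulInjectiveSentence, Sentence.Realize, Formula.Realize, Fin.snoc]

theorem realize_socleCardGeSentence (p k : ℕ) :
    G ⊨ socleCardGeSentence p k ↔
      ∃ xs : Fin k → G, Function.Injective xs ∧ ∀ i, p • xs i = 0 := by
  rw [socleCardGeSentence, Sentence.Realize, realize_exs]
  simp [Function.Injective, not_imp_not]

end abLang

/-- Every model of the complete first-order theory of `⊕_{n<ω} Z(p^∞)` (i.e., every
abelian group elementarily equivalent to it) is isomorphic to a direct sum
`⊕_{i∈I} Z(p^∞) ⊕ ⊕_{j∈J} ℚ` with `I` infinite. -/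
theorem stmt7 (p : ℕ) [Fact p.Prime] (G : Type) [AddCommGroup G]
    (h : G ≅[abLang] (ℕ →₀ PruferGroup p)) :
    ∃ (I J : Type), Infinite I ∧
      Nonempty (G ≃+ ((I →₀ PruferGroup p) × (J →₀ ℚ))) := by
  open abLang in
  have hdiv : ∀ n : ℕ, n ≠ 0 → Function.Surjective fun x : G => n • x := fun n hn =>
    have : DivisibleBy (ℕ →₀ PruferGroup p) ℕ := AddGroup.divisibleByNatOfDivisibleByInt _
    (realize_divisibleSentence n).mp ((h.realize_sentence _).mpr
      ((realize_divisibleSentence n).mpr (DivisibleBy.surjective_smul _ ℕ hn)))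
  have htf : ∀ n : ℕ, n.Coprime p → ∀ x : G, n • x = 0 → x = 0 := fun n hn =>
    (realize_nsmulInjectiveSentence n).mp ((h.realize_sentence _).mpr
      ((realize_nsmulInjectiveSentence n).mpr fun x => eq_zero_of_nsmul_eq_zero_of_coprime
        (Finsupp.mem_primaryComponent (PruferGroup.mem_primaryComponent p) x) hn))
  have hsocle : Infinite (AddSubgroup.torsionBy G p) := (infinite_torsionBy_iff p).mpr fun k =>
    (realize_socleCardGeSentence p k).mp ((h.realize_sentence _).mpr
      ((realize_socleCardGeSentence p k).mpr
        ((infinite_torsionBy_iff p).mp (PruferGroup.infinite_torsionBy_finsupp p ℕ) k)))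
  have : DivisibleBy G ℕ := divisibleByOfSMulRightSurj G ℕ (hdiv _)
  have : DivisibleBy G ℤ := AddGroup.divisibleByIntOfDivisibleByNat G
  let _ : Module (ZMod p) (AddSubgroup.torsionBy G p) := AddSubgroup.torsionBy.zmodModule
  let b := Module.Basis.ofVectorSpace (ZMod p) (AddSubgroup.torsionBy G p)
  obtain ⟨J, e⟩ := exists_addEquiv_finsupp_pruferGroup_prod (torsion_le_primaryComponent htf) b
  exact ⟨_, J, b.infinite_index, e⟩
end
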